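/- A variety U of closure algebras contains the four-element simple closure algebra S2 if and only if U does not satisfy the McKinsey identity ◻◇x ≤ ◇◻x. -/

import Mathlib

/-- A modal algebra: a Boolean algebra with a unary operation `◇` satisfying
`◇⊥ = ⊥` and `◇(a ⊔ b) = ◇a ⊔ ◇b`. -/
class ModalAlg (M : Type) extends BooleanAlgebra M where
  dia : M → M
  dia_bot : dia ⊥ = ⊥
  dia_sup : ∀ a b : M, dia (a ⊔ b) = dia a ⊔ dia b

/-- A closure algebra: a modal algebra satisfying `a ≤ ◇a = ◇◇a`. -/
class ClosAlg (M : Type) extends ModalAlg M where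
  le_dia : ∀ a : M, a ≤ dia a
  dia_dia : ∀ a : M, dia (dia a) = dia a

/-- The possibility operator `◇`. -/
def dia {M : Type} [ModalAlg M] : M → M := ModalAlg.dia

/-- The necessity operator `◻x = ¬◇¬x`. -/
def box {M : Type} [ModalAlg M] (a : M) : M := (dia aᶜ)ᶜ

/-- A homomorphism of closure algebras: it preserves the Boolean structure
(`⊔`, `ᶜ`, `⊥`, and hence `⊓`, `⊤`) and `◇`. -/
structure ClosHom (M N : Type) [ClosAlg M] [ClosAlg N] where
  toFun : M → N
  map_sup : ∀ a b : M, toFun (a ⊔ b) = toFun a ⊔ toFun b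
  map_compl : ∀ a : M, toFun aᶜ = (toFun a)ᶜ
  map_bot : toFun ⊥ = ⊥
  map_dia : ∀ a : M, toFun (dia a) = dia (toFun a)

/-- The two-element closure algebra `2`, with identity `◇`. -/
instance : ModalAlg Bool :=
  { (inferInstance : BooleanAlgebra Bool) with
    dia := id
    dia_bot := rfl
    dia_sup := fun _ _ => rfl }

instance : ClosAlg Bool :=
  { (inferInstance : ModalAlg Bool) with
    le_dia := fun _ => le_rfl
    dia_dia := fun _ => rfl }

/-- Pointwise closure algebra structure on a product. -/
instance piClosAlg {I : Type} (A : I → Type) [∀ i, ClosAlg (A i)] : ClosAlg (∀ i, A i) :=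
  { (inferInstance : BooleanAlgebra (∀ i, A i)) with
    dia := fun x i => dia (x i)
    dia_bot := funext fun _ => ModalAlg.dia_bot
    dia_sup := fun a b => funext fun i => ModalAlg.dia_sup (a i) (b i)
    le_dia := fun a i => ClosAlg.le_dia (a i)
    dia_dia := fun a => funext fun i => ClosAlg.dia_dia (a i) }

/-- A bundled closure algebra. -/
structure CAlg where
  carrier : Type
  [str : ClosAlg carrier]

attribute [instance] CAlg.str

/-- Direct product of a family of closure algebras. -/
def CAlg.pi {I : Type} (A : I → CAlg) : CAlg := ⟨∀ i, (A i).carrier⟩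

/-- A class of closure algebras is a variety if it is closed under homomorphic images,
subalgebras (injective homomorphisms) and direct products. -/
def IsCAVariety (V : Set CAlg) : Prop :=
  (∀ A ∈ V, ∀ B : CAlg, ∀ f : ClosHom A.carrier B.carrier,
      Function.Surjective f.toFun → B ∈ V) ∧
  (∀ A : CAlg, ∀ B ∈ V, ∀ f : ClosHom A.carrier B.carrier,
      Function.Injective f.toFun → A ∈ V) ∧
  (∀ (I : Type) (A : I → CAlg), (∀ i, A i ∈ V) → CAlg.pi A ∈ V)

/-- The "simple" closure structure on a Boolean algebra: `◇x = ⊤` for `x ≠ ⊥`. -/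
def simpleClos (B : Type) [BooleanAlgebra B] [DecidableEq B] : ClosAlg B :=
  { (inferInstance : BooleanAlgebra B) with
    dia := fun x => if x = ⊥ then ⊥ else ⊤
    dia_bot := by simp
    dia_sup := by
      intro a b
      by_cases ha : a = ⊥ <;> by_cases hb : b = ⊥ <;>
        simp [ha, hb, sup_eq_bot_iff]
    le_dia := by intro a; by_cases h : a = ⊥ <;> simp [h]
    dia_dia := by
      intro a
      by_cases h : a = ⊥ <;> by_cases h2 : (⊤ : B) = ⊥ <;> simp [h, h2] }

/-- The four-element simple closure algebra `S₂`: the four-element Boolean algebra in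
which `◇a = ⊤` for every `a ≠ ⊥` (so `⊥` and `⊤` are the only open/closed elements). -/
noncomputable def S2 : CAlg := @CAlg.mk (Bool × Bool) (simpleClos _)

/-!
If `x` refutes the McKinsey identity, then `c = ◻(◇x ⊓ ◇xᶜ)` is a nonzero open element.
Relativizing to `c`, i.e. passing to `[⊥, c]` with `◇_c y = ◇y ⊓ c` along `y ↦ y ⊓ c`, is a
surjective homomorphism because `c` is open; it realizes the quotient by the congruence generated
by `(◇x ⊓ ◇xᶜ, ⊤)`. Since `c ≤ ◇x ⊓ ◇xᶜ`, the image of `x` and its relative complement are both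
dense in `[⊥, c]`, so together with `⊥` and `c` they form a copy of `S₂`. Conversely, an atom `a`
of `S₂` has `◻◇a = ⊤` and `◇◻a = ⊥`.
-/

namespace Set.Iic

variable {α : Type*} [BooleanAlgebra α] {c : α}

instance booleanAlgebra : BooleanAlgebra (Set.Iic c) where
  __ := (inferInstance : Lattice (Set.Iic c))
  __ := (inferInstance : BoundedOrder (Set.Iic c))
  le_sup_inf x y z := show ((x ⊔ y) ⊓ (x ⊔ z) : α) ≤ x ⊔ y ⊓ z from le_sup_inf
  compl x := ⟨(x : α)ᶜ ⊓ c, inf_le_right⟩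
  inf_compl_le_bot x := show (x : α) ⊓ ((x : α)ᶜ ⊓ c) ≤ ⊥ by simp [← inf_assoc]
  top_le_sup_compl x := show c ≤ (x : α) ⊔ (x : α)ᶜ ⊓ c by
    rw [sup_inf_left, sup_compl_eq_top, top_inf_eq]; exact le_sup_right

end Set.Iic

lemma cond_or_sup {α : Type*} [SemilatticeSup α] [OrderBot α] (p q : Bool) (u : α) :
    cond (p || q) u ⊥ = cond p u ⊥ ⊔ cond q u ⊥ := by
  cases p <;> cases q <;> simp

section ModalAlg

variable {M : Type} [ModalAlg M]

lemma dia_bot : dia (⊥ : M) = ⊥ := ModalAlg.dia_bot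

lemma dia_sup (a b : M) : dia (a ⊔ b) = dia a ⊔ dia b := ModalAlg.dia_sup a b

lemma dia_mono {a b : M} (h : a ≤ b) : dia a ≤ dia b := by
  rw [← sup_eq_right.mpr h, dia_sup]; exact le_sup_left

lemma compl_box (a : M) : (box a)ᶜ = dia aᶜ := compl_compl _

lemma box_inf (a b : M) : box (a ⊓ b) = box a ⊓ box b := by
  simp only [box, compl_inf, dia_sup, compl_sup]

lemma box_eq_bot_of_dia_compl_eq_top {a : M} (h : dia aᶜ = ⊤) : box a = ⊥ := by
  rw [box, h, compl_top]

lemma box_dia_inf_dia_compl_ne_bot {x : M} (hx : ¬ box (dia x) ≤ dia (box x)) :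
    box (dia x ⊓ dia xᶜ) ≠ ⊥ := by
  contrapose! hx
  rw [box_inf, ← disjoint_iff, ← le_compl_iff_disjoint_right, compl_box] at hx
  exact hx

lemma dia_inf_le_dia_inf_of_box_eq_self {c : M} (hc : box c = c) (y : M) :
    dia y ⊓ c ≤ dia (y ⊓ c) := by
  have hy : dia y ≤ dia (y ⊓ c) ⊔ cᶜ :=
    calc dia y = dia (y ⊓ c) ⊔ dia (y ⊓ cᶜ) := by rw [← dia_sup, ← inf_sup_left]; simp
      _ ≤ dia (y ⊓ c) ⊔ cᶜ := by
        gcongr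
        calc dia (y ⊓ cᶜ) ≤ dia cᶜ := dia_mono inf_le_right
          _ = cᶜ := by rw [← compl_box, hc]
  calc dia y ⊓ c ≤ (dia (y ⊓ c) ⊔ cᶜ) ⊓ c := inf_le_inf_right c hy
    _ ≤ dia (y ⊓ c) := by rw [inf_sup_right]; simp

end ModalAlg

section ClosAlg

variable {M : Type} [ClosAlg M]

lemma le_dia (a : M) : a ≤ dia a := ClosAlg.le_dia a

lemma dia_dia (a : M) : dia (dia a) = dia a := ClosAlg.dia_dia a

lemma dia_top : dia (⊤ : M) = ⊤ := top_le_iff.mp (le_dia ⊤)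

lemma box_le (a : M) : box a ≤ a := compl_le_iff_compl_le.mpr (le_dia _)

lemma box_box (a : M) : box (box a) = box a := by
  rw [box, compl_box, dia_dia, ← compl_box, compl_compl]

lemma not_box_dia_le_dia_box_of_dia_eq_top [Nontrivial M] {u : M}
    (hu : dia u = ⊤) (hu' : dia uᶜ = ⊤) : ¬ box (dia u) ≤ dia (box u) := by
  rw [hu, box_eq_bot_of_dia_compl_eq_top hu', dia_bot]
  simp [box, dia_bot]

end ClosAlg

namespace ClosHom

variable {M N : Type} [ClosAlg M] [ClosAlg N]

lemma map_inf (f : ClosHom M N) (a b : M) : f.toFun (a ⊓ b) = f.toFun a ⊓ f.toFun b := by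
  have h : a ⊓ b = (aᶜ ⊔ bᶜ)ᶜ := by rw [compl_sup, compl_compl, compl_compl]
  rw [h, f.map_compl, f.map_sup, f.map_compl, f.map_compl, compl_sup, compl_compl, compl_compl]

lemma injective_of_map_eq_bot (f : ClosHom M N) (h : ∀ a, f.toFun a = ⊥ → a = ⊥) :
    Function.Injective f.toFun := by
  have map_sdiff (a b : M) : f.toFun (a \ b) = f.toFun a \ f.toFun b := by
    rw [sdiff_eq, f.map_inf, f.map_compl, sdiff_eq]
  intro a b hab
  refine le_antisymm (sdiff_eq_bot_iff.mp (h _ ?_)) (sdiff_eq_bot_iff.mp (h _ ?_)) <;>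
    simp [map_sdiff, hab]

end ClosHom

instance Set.Iic.closAlg {M : Type} [ClosAlg M] (c : M) : ClosAlg (Set.Iic c) where
  __ := Set.Iic.booleanAlgebra
  dia y := ⟨dia (y : M) ⊓ c, inf_le_right⟩
  dia_bot := Subtype.ext <| show dia (⊥ : M) ⊓ c = ⊥ by simp [dia_bot]
  dia_sup a b := Subtype.ext <|
    show dia ((a : M) ⊔ b) ⊓ c = dia (a : M) ⊓ c ⊔ dia (b : M) ⊓ c by rw [dia_sup, inf_sup_right]
  le_dia a := show (a : M) ≤ dia (a : M) ⊓ c from le_inf (le_dia _) a.2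
  dia_dia a := Subtype.ext <| show dia (dia (a : M) ⊓ c) ⊓ c = dia (a : M) ⊓ c from
    le_antisymm (inf_le_inf_right c ((dia_mono inf_le_left).trans (dia_dia _).le))
      (le_inf (le_dia _) inf_le_right)

section Relativization

variable {M : Type} [ClosAlg M] {c : M}

def relativizeHom (hc : box c = c) : ClosHom M (Set.Iic c) where
  toFun y := ⟨y ⊓ c, inf_le_right⟩
  map_sup a b := Subtype.ext (inf_sup_right a b c)
  map_compl a := Subtype.ext <| show aᶜ ⊓ c = (a ⊓ c)ᶜ ⊓ c by simp [inf_sup_right]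
  map_bot := Subtype.ext (bot_inf_eq c)
  map_dia a := Subtype.ext <| show dia a ⊓ c = dia (a ⊓ c) ⊓ c from
    le_antisymm (le_inf (dia_inf_le_dia_inf_of_box_eq_self hc a) inf_le_right)
      (inf_le_inf_right c (dia_mono inf_le_left))

lemma relativizeHom_surjective (hc : box c = c) : Function.Surjective (relativizeHom hc).toFun :=
  fun y => ⟨y, Subtype.ext (inf_eq_left.mpr y.2)⟩

lemma relativizeHom_eq_top_iff (hc : box c = c) {y : M} :
    (relativizeHom hc).toFun y = ⊤ ↔ c ≤ y := by
  rw [Set.Iic.eq_top_iff]; exact inf_eq_right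

end Relativization

section S2

variable {M : Type} [ClosAlg M]

def s2Hom {u : M} (hu : dia u = ⊤) (hu' : dia uᶜ = ⊤) : ClosHom S2.carrier M where
  toFun z := cond z.1 u ⊥ ⊔ cond z.2 uᶜ ⊥
  map_sup a b := by
    change cond (a.1 || b.1) u ⊥ ⊔ cond (a.2 || b.2) uᶜ ⊥ = _
    rw [cond_or_sup, cond_or_sup, sup_sup_sup_comm]
  map_compl a := by
    change cond (!a.1) u ⊥ ⊔ cond (!a.2) uᶜ ⊥ = _
    rcases a with ⟨_ | _, _ | _⟩ <;> simp
  map_bot := sup_idem ⊥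
  map_dia a := by
    rcases a with ⟨_ | _, _ | _⟩
    · show (⊥ : M) ⊔ ⊥ = dia (⊥ ⊔ ⊥)
      simp [dia_bot]
    · show u ⊔ uᶜ = dia (⊥ ⊔ uᶜ)
      simp [hu']
    · show u ⊔ uᶜ = dia (u ⊔ ⊥)
      simp [hu]
    · show u ⊔ uᶜ = dia (u ⊔ uᶜ)
      simp [dia_top]

lemma s2Hom_injective [Nontrivial M] {u : M} (hu : dia u = ⊤) (hu' : dia uᶜ = ⊤) :
    Function.Injective (s2Hom hu hu').toFun := by
  refine (s2Hom hu hu').injective_of_map_eq_bot fun z hz => ?_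
  rcases z with ⟨_ | _, _ | _⟩
  · rfl
  · replace hz : uᶜ = ⊥ := by simpa [s2Hom] using hz
    simp [hz, dia_bot] at hu'
  · replace hz : u = ⊥ := by simpa [s2Hom] using hz
    simp [hz, dia_bot] at hu
  · replace hz : u ⊔ uᶜ = ⊥ := hz
    simp at hz

end S2

lemma S2_not_mcKinsey : ¬ ∀ x : S2.carrier, box (dia x) ≤ dia (box x) :=
  have : Nontrivial S2.carrier := inferInstanceAs (Nontrivial (Bool × Bool))
  fun h => not_box_dia_le_dia_box_of_dia_eq_top (u := show S2.carrier from (true, false)) rfl rfl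
    (h _)

lemma S2_mem_of_not_mcKinsey {U : Set CAlg} (hU : IsCAVariety U) {A : CAlg} (hA : A ∈ U)
    {x : A.carrier} (hx : ¬ box (dia x) ≤ dia (box x)) : S2 ∈ U := by
  obtain ⟨closed_hom, closed_sub, -⟩ := hU
  set c := box (dia x ⊓ dia xᶜ)
  have hc : box c = c := box_box _
  have hcx : c ≤ dia x ⊓ dia xᶜ := box_le _
  have hN : CAlg.mk (Set.Iic c) ∈ U :=
    closed_hom A hA _ (relativizeHom hc) (relativizeHom_surjective hc)
  have : Nontrivial (Set.Iic c) :=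
    nontrivial_of_ne ⊥ ⊤ fun h => box_dia_inf_dia_compl_ne_bot hx (congrArg Subtype.val h).symm
  set u := (relativizeHom hc).toFun x
  have hu : dia u = ⊤ := by
    rw [← (relativizeHom hc).map_dia, relativizeHom_eq_top_iff]
    exact hcx.trans inf_le_left
  have hu' : dia uᶜ = ⊤ := by
    rw [← (relativizeHom hc).map_compl, ← (relativizeHom hc).map_dia, relativizeHom_eq_top_iff]
    exact hcx.trans inf_le_right
  exact closed_sub S2 _ hN (s2Hom hu hu') (s2Hom_injective hu hu')

/-- a variety `U` of closure algebras contains `S₂` if and only if `U` does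
not satisfy the McKinsey identity `◻◇x ≤ ◇◻x`. -/
theorem stmt7 (U : Set CAlg) (hU : IsCAVariety U) :
    S2 ∈ U ↔ ¬ (∀ A ∈ U, ∀ x : A.carrier, box (dia x) ≤ dia (box x)) := by
  refine ⟨fun hS2 h => S2_not_mcKinsey (h S2 hS2), fun h => ?_⟩
  push Not at h
  obtain ⟨A, hA, x, hx⟩ := h
  exact S2_mem_of_not_mcKinsey hU hA hx
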